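/- arXiv:1708.05439 — 4 statements merged into one kernel-verified Lean document; each statement's English description precedes it below -/
import Mathlib

section
/- For general p ≥ 1 and 0 < u < t, the derivative of ln_t (the p-th order Taylor expansion of ln at t) equals [1 - (1 - u/t)^p] · (1/u). Consequently, the tangent likelihood score equals the likelihood score times the weight w(u) = 1 - (1 - u/t)^p. -/
noncomputable def lntp (t : ℝ) (p : ℕ) (u : ℝ) : ℝ :=
  if t < u then Real.log u
  else Real.log t +
    ∑ k ∈ Finset.Icc 1 p,
      ((-1 : ℝ) ^ (k - 1) * (Nat.factorial (k - 1) : ℝ) / t ^ k) * (u - t) ^ k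
        / (Nat.factorial k : ℝ)

/-!
Below `t` the Taylor polynomial is `log t - ∑_{k=1}^p q^k / k` with `q = 1 - u/t`. Its derivative
in `u` is `(1/t) ∑_{k<p} q^k`, and the geometric sum identity `(1 - q) ∑_{k<p} q^k = 1 - q^p`
with `1 - q = u/t` turns this into `(1 - q^p) / u`.
-/

open Finset

lemma taylor_log_term_eq_neg_pow_div {t : ℝ} (ht : t ≠ 0) (u : ℝ) {k : ℕ} (hk : 1 ≤ k) :
    ((-1 : ℝ) ^ (k - 1) * ((k - 1).factorial : ℝ) / t ^ k) * (u - t) ^ k / (k.factorial : ℝ)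
      = -((1 - u / t) ^ k / k) := by
  obtain ⟨j, rfl⟩ : ∃ j, k = j + 1 := ⟨k - 1, by omega⟩
  have hsign : (-1 : ℝ) ^ j * (u - t) ^ (j + 1) = -(t - u) ^ (j + 1) := by
    rw [pow_succ, ← mul_assoc, ← mul_pow]; ring
  rw [Nat.add_sub_cancel, Nat.factorial_succ, show 1 - u / t = (t - u) / t by field_simp, div_pow]
  push_cast
  field_simp
  exact hsign

lemma lntp_of_le {t : ℝ} (ht : t ≠ 0) (p : ℕ) {u : ℝ} (hut : u ≤ t) :
    lntp t p u = Real.log t - ∑ k ∈ Icc 1 p, (1 - u / t) ^ k / k := by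
  rw [lntp, if_neg hut.not_gt, sub_eq_add_neg (Real.log t), ← sum_neg_distrib]
  congr 1
  exact sum_congr rfl fun k hk => taylor_log_term_eq_neg_pow_div ht u (mem_Icc.mp hk).1

lemma hasDerivAt_sum_pow_div (p : ℕ) (y : ℝ) :
    HasDerivAt (fun y : ℝ => ∑ k ∈ Icc 1 p, y ^ k / k) (∑ i ∈ range p, y ^ i) y := by
  have hterm : ∀ k ∈ Icc 1 p, HasDerivAt (fun y : ℝ => y ^ k / k) (y ^ (k - 1)) y := by
    intro k hk
    have hk0 : (k : ℝ) ≠ 0 := by have := (mem_Icc.mp hk).1; positivity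
    refine ((hasDerivAt_pow k y).div_const (k : ℝ)).congr_deriv ?_
    rw [mul_div_cancel_left₀ _ hk0]
  refine (HasDerivAt.fun_sum hterm).congr_deriv ?_
  rw [← Ico_add_one_right_eq_Icc, sum_Ico_eq_sum_range]
  simp

lemma hasDerivAt_lntp_of_lt {t u : ℝ} (p : ℕ) (ht : t ≠ 0) (hut : u < t) :
    HasDerivAt (lntp t p) ((∑ i ∈ range p, (1 - u / t) ^ i) / t) u := by
  have hpoly : lntp t p =ᶠ[nhds u] fun x => Real.log t - ∑ k ∈ Icc 1 p, (1 - x / t) ^ k / k := by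
    filter_upwards [Iio_mem_nhds hut] with x hx
    exact lntp_of_le ht p hx.le
  have hq : HasDerivAt (fun x => 1 - x / t) (-(1 / t)) u := by
    simpa using ((hasDerivAt_id u).div_const t).const_sub 1
  refine ((((hasDerivAt_sum_pow_div p _).comp u hq).const_sub (Real.log t)).congr_of_eventuallyEq
    hpoly).congr_deriv ?_
  ring

theorem lntp_hasDerivAt_general (t : ℝ) (p : ℕ)
    (u : ℝ) (hu : 0 < u) (hut : u < t) :
    HasDerivAt (lntp t p) ((1 - (1 - u / t) ^ p) * (1 / u)) u := by
  have ht : t ≠ 0 := (hu.trans hut).ne'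
  refine (hasDerivAt_lntp_of_lt p ht hut).congr_deriv ?_
  rw [← geom_sum_mul_neg, sub_sub_cancel]
  field_simp

theorem lntp_hasDerivAt (t : ℝ) (ht : 0 < t) (p : ℕ) (hp : 1 ≤ p)
    (u : ℝ) (hu : 0 < u) (hut : u < t) :
    HasDerivAt (lntp t p) ((1 - (1 - u / t) ^ p) * (1 / u)) u :=
  lntp_hasDerivAt_general t p u hu hut
end

section
/- If φ_σ denotes the Gaussian density with mean 0 and standard deviation σ, and t ≥ φ_σ(0) = 1/(σ√(2π)), then ln_t(φ_σ(r)) = ln(t) + (φ_σ(r) - t)/t for all r ∈ ℝ; consequently, maximizing Σ_i ln_t(φ_σ(y_i - x_iᵀβ)) over β is equivalent to maximizing Σ_i φ_σ(y_i - x_iᵀβ), i.e., MTE reduces to minimum ℓ2 distance / exponential squared loss estimation when t exceeds the density's maximum value. -/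
noncomputable def lnt (t u : ℝ) : ℝ :=
  if t < u then Real.log u else Real.log t + (u - t) / t

noncomputable def gauss (σ r : ℝ) : ℝ :=
  Real.exp (-r ^ 2 / (2 * σ ^ 2)) / (σ * Real.sqrt (2 * Real.pi))

theorem mte_reduces_to_l2 (σ t : ℝ) (hσ : 0 < σ) (ht : gauss σ 0 ≤ t) :
    (∀ r : ℝ, lnt t (gauss σ r) = Real.log t + (gauss σ r - t) / t) ∧
    (∀ (n : ℕ) (r r' : Fin n → ℝ),
      (∑ i, lnt t (gauss σ (r i)) ≤ ∑ i, lnt t (gauss σ (r' i)) ↔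
        ∑ i, gauss σ (r i) ≤ ∑ i, gauss σ (r' i))) := by
  have hden : 0 < σ * Real.sqrt (2 * Real.pi) := by
    positivity
  have hmax : ∀ r : ℝ, gauss σ r ≤ gauss σ 0 := by
    intro r
    unfold gauss
    gcongr Real.exp ?_ / _
    have h2 : 0 < 2 * σ ^ 2 := by positivity
    rw [div_le_div_iff₀ h2 h2]
    nlinarith [sq_nonneg r]
  have hle : ∀ r : ℝ, gauss σ r ≤ t := fun r => (hmax r).trans ht
  have h0 : 0 < gauss σ 0 := by
    unfold gauss; positivity
  have htpos : 0 < t := lt_of_lt_of_le h0 ht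
  have key : ∀ r : ℝ, lnt t (gauss σ r) = Real.log t + (gauss σ r - t) / t := by
    intro r
    unfold lnt
    rw [if_neg (not_lt.mpr (hle r))]
  refine ⟨key, fun n r r' => ?_⟩
  simp only [key]
  have expand : ∀ f : Fin n → ℝ,
      ∑ i, (Real.log t + (gauss σ (f i) - t) / t)
        = n * (Real.log t - 1) + (∑ i, gauss σ (f i)) / t := by
    intro f
    rw [Finset.sum_add_distrib, Finset.sum_const, Finset.card_univ, Fintype.card_fin]
    rw [← Finset.sum_div, Finset.sum_sub_distrib, Finset.sum_const, Finset.card_univ,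
      Fintype.card_fin]
    field_simp
    ring
  rw [expand r, expand r', add_le_add_iff_left, div_le_div_iff_of_pos_right htpos]
end

section
/- Suppose ε has a distribution symmetric about 0 with density g, and f = φ_σ is Gaussian. Then for any t > 0 and p = 1, μ* = 0 uniquely maximizes μ ↦ E[ln_t(φ_σ(ε - μ))] provided g is symmetric and unimodal (nonincreasing on [0,∞)). In particular, the MTE population objective for a symmetric-error location model is maximized at the true location. -/
open MeasureTheory

/-! For even `F` and `g`, the substitution `y ↦ -y - m` gives
`2 (∫ F x g x - ∫ F (x - m) g x) = ∫ (F y - F (y + m)) (g y - g (y + m)) dy`.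
If `F` and `g` are both nonincreasing in `|y|`, the two factors always have the same sign, so the
integrand is nonnegative. For `y, m > 0` the first factor is strictly positive, and the second
cannot vanish a.e. on `(0, ∞)`, since its integral there telescopes to
`∫ x in (0, m], g x > 0`. -/

open Set Filter

section SymmetricUnimodal

variable {F g : ℝ → ℝ}

lemma Function.Even.apply_abs (hg : Function.Even g) (x : ℝ) : g |x| = g x := by
  rcases abs_choice x with h | h <;> simp [h, hg x]

lemma Function.Even.le_of_abs_le (hg : Function.Even g) (hanti : AntitoneOn g (Ici 0))
    {a b : ℝ} (hab : |a| ≤ |b|) : g b ≤ g a := by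
  rw [← hg.apply_abs a, ← hg.apply_abs b]
  exact hanti (abs_nonneg a) (abs_nonneg b) hab

lemma Function.Even.lt_of_abs_lt (hg : Function.Even g) (hanti : StrictAntiOn g (Ici 0))
    {a b : ℝ} (hab : |a| < |b|) : g b < g a := by
  rw [← hg.apply_abs a, ← hg.apply_abs b]
  exact hanti (abs_nonneg a) (abs_nonneg b) hab

lemma Function.Even.exists_pos_apply_pos (hg : Function.Even g) (h : 0 < ∫ x, g x) :
    ∃ x, 0 < x ∧ 0 < g x := by
  by_contra! hneg
  have hnonpos : g ≤ᵐ[volume] 0 := by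
    filter_upwards [Measure.ae_ne volume 0] with x hx
    exact hg.apply_abs x ▸ hneg |x| (abs_pos.2 hx)
  exact (integral_nonpos_of_ae hnonpos).not_gt h

lemma mul_sub_nonneg_of_even_antitoneOn (hF_even : Function.Even F) (hF : AntitoneOn F (Ici 0))
    (hg_even : Function.Even g) (hg : AntitoneOn g (Ici 0)) (a b : ℝ) :
    0 ≤ (F a - F b) * (g a - g b) := by
  rcases le_total |a| |b| with h | h
  · exact mul_nonneg (sub_nonneg.2 (hF_even.le_of_abs_le hF h))
      (sub_nonneg.2 (hg_even.le_of_abs_le hg h))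
  · exact mul_nonneg_of_nonpos_of_nonpos (sub_nonpos.2 (hF_even.le_of_abs_le hF h))
      (sub_nonpos.2 (hg_even.le_of_abs_le hg h))

lemma integral_comp_add_mul_eq (hF : Function.Even F) (hg : Function.Even g) (m : ℝ) :
    ∫ x, F (x + m) * g x = ∫ x, F (x - m) * g x := by
  rw [← integral_neg_eq_self]
  congr 1 with x
  rw [hg, ← hF, neg_add, neg_neg, sub_eq_add_neg]

lemma integrable_comp_add_mul (hF : Function.Even F) (hg : Function.Even g) {m : ℝ}
    (hint : Integrable fun x => F (x - m) * g x) : Integrable fun x => F (x + m) * g x := by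
  refine hint.comp_neg.congr (Eventually.of_forall fun x => ?_)
  simp only [hg x, ← hF (x + m), neg_add, sub_eq_add_neg]

lemma setIntegral_Ioi_sub_comp_add (hg : Integrable g) {m : ℝ} (hm : 0 ≤ m) (a : ℝ) :
    ∫ x in Ioi a, (g x - g (x + m)) = ∫ x in Ioc a (a + m), g x := by
  have hshift : ∫ x in Ioi a, g (x + m) = ∫ x in Ioi (a + m), g x := by
    have := (measurePreserving_add_right volume m).setIntegral_preimage_emb
      (measurableEmbedding_addRight m) g (Ioi (a + m))
    rwa [preimage_add_const_Ioi, add_sub_cancel_right] at this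
  have hsplit : ∫ x in Ioi a, g x =
      (∫ x in Ioc a (a + m), g x) + ∫ x in Ioi (a + m), g x := by
    rw [← setIntegral_union Ioc_disjoint_Ioi_same measurableSet_Ioi hg.integrableOn
      hg.integrableOn, Ioc_union_Ioi_eq_Ioi (le_add_of_nonneg_right hm)]
  rw [integral_sub hg.integrableOn (hg.comp_add_right m).integrableOn, hshift, hsplit]
  ring

lemma setIntegral_Ioc_pos_of_antitoneOn (hg0 : 0 ≤ g) (hg : AntitoneOn g (Ici 0))
    (hg_int : Integrable g) {x₀ : ℝ} (hx₀ : 0 < x₀) (hgx₀ : 0 < g x₀) {m : ℝ}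
    (hm : 0 < m) :
    0 < ∫ x in Ioc 0 m, g x := by
  rw [setIntegral_pos_iff_support_of_nonneg_ae (Eventually.of_forall hg0) hg_int.integrableOn]
  calc 0 < volume (Ioc 0 (min x₀ m)) := by simp [hx₀, hm]
    _ ≤ volume (Function.support g ∩ Ioc 0 m) := measure_mono fun x hx =>
      ⟨(hgx₀.trans_le (hg (mem_Ici.2 hx.1.le) (mem_Ici.2 hx₀.le)
        (hx.2.trans (min_le_left _ _)))).ne', hx.1, hx.2.trans (min_le_right _ _)⟩

section
variable (hF : Function.Even F) (hg : Function.Even g)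
  (hint : ∀ m, Integrable fun x => F (x - m) * g x)
include hF hg hint

lemma integrable_sub_mul_sub_comp_add (m : ℝ) :
    Integrable fun y => (F y - F (y + m)) * (g y - g (y + m)) := by
  have h0 : Integrable fun y => F y * g y := by simpa using hint 0
  have h1 := (hint m).comp_add_right m
  have h2 := integrable_comp_add_mul hF hg (hint m)
  have h3 := h0.comp_add_right m
  refine ((h0.sub h1).sub (h2.sub h3)).congr (Eventually.of_forall fun y => ?_)
  simp only [Pi.sub_apply, add_sub_cancel_right]
  ring

lemma integral_sub_mul_sub_comp_add (m : ℝ) :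
    ∫ y, (F y - F (y + m)) * (g y - g (y + m)) =
      2 * ((∫ x, F x * g x) - ∫ x, F (x - m) * g x) := by
  have h0 : Integrable fun y => F y * g y := by simpa using hint 0
  have h1 : Integrable fun y => F (y + m - m) * g (y + m) := (hint m).comp_add_right m
  have h2 := integrable_comp_add_mul hF hg (hint m)
  have h3 : Integrable fun y => F (y + m) * g (y + m) := h0.comp_add_right m
  have h01 : Integrable fun y => F y * g y - F (y + m - m) * g (y + m) := h0.sub h1
  have h23 : Integrable fun y => F (y + m) * g y - F (y + m) * g (y + m) := h2.sub h3
  have hexpand : (fun y => (F y - F (y + m)) * (g y - g (y + m))) = fun y =>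
      (F y * g y - F (y + m - m) * g (y + m)) - (F (y + m) * g y - F (y + m) * g (y + m)) := by
    ext y
    rw [add_sub_cancel_right]
    ring
  rw [hexpand, integral_sub h01 h23, integral_sub h0 h1, integral_sub h2 h3,
    integral_add_right_eq_self (fun x => F (x - m) * g x),
    integral_add_right_eq_self (fun y => F y * g y), integral_comp_add_mul_eq hF hg]
  ring

end

theorem integral_comp_sub_mul_lt_of_even_strictAntiOn (hF_even : Function.Even F)
    (hF : StrictAntiOn F (Ici 0)) (hg_even : Function.Even g) (hg : AntitoneOn g (Ici 0))
    (hg0 : 0 ≤ g) (hg_pos : 0 < ∫ x, g x) (hint : ∀ m, Integrable fun x => F (x - m) * g x)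
    {m : ℝ} (hm : m ≠ 0) : ∫ x, F (x - m) * g x < ∫ x, F x * g x := by
  wlog hm_pos : 0 < m generalizing m
  · have hreflect := integral_comp_add_mul_eq hF_even hg_even (-m)
    simp only [← sub_eq_add_neg] at hreflect
    exact hreflect ▸ this (neg_ne_zero.2 hm) (neg_pos.2 (hm.lt_or_gt.resolve_right hm_pos))
  have hg_int : Integrable g := Integrable.of_integral_ne_zero hg_pos.ne'
  obtain ⟨x₀, hx₀, hgx₀⟩ := hg_even.exists_pos_apply_pos hg_pos
  have habs : ∀ y ∈ Ioi (0 : ℝ), |y| < |y + m| := fun y hy => by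
    rw [abs_of_pos hy, abs_of_pos (add_pos hy hm_pos)]
    linarith
  have hF_drop : ∀ y ∈ Ioi (0 : ℝ), 0 < F y - F (y + m) := fun y hy =>
    sub_pos.2 (hF_even.lt_of_abs_lt hF (habs y hy))
  have hg_drop : ∀ y ∈ Ioi (0 : ℝ), 0 ≤ g y - g (y + m) := fun y hy =>
    sub_nonneg.2 (hg_even.le_of_abs_le hg (habs y hy).le)
  have htel : 0 < ∫ y in Ioi 0, (g y - g (y + m)) := by
    rw [setIntegral_Ioi_sub_comp_add hg_int hm_pos.le, zero_add]
    exact setIntegral_Ioc_pos_of_antitoneOn hg0 hg hg_int hx₀ hgx₀ hm_pos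
  rw [setIntegral_pos_iff_support_of_nonneg_ae ((ae_restrict_iff' measurableSet_Ioi).2
    (Eventually.of_forall hg_drop)) ((hg_int.sub (hg_int.comp_add_right m)).integrableOn)] at htel
  have hcov : 0 < ∫ y, (F y - F (y + m)) * (g y - g (y + m)) := by
    rw [integral_pos_iff_support_of_nonneg (fun y => mul_sub_nonneg_of_even_antitoneOn hF_even
      hF.antitoneOn hg_even hg y (y + m)) (integrable_sub_mul_sub_comp_add hF_even hg_even hint m)]
    exact htel.trans_le (measure_mono fun y hy => mul_ne_zero (hF_drop y hy.2).ne' hy.1)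
  linarith [integral_sub_mul_sub_comp_add hF_even hg_even hint m]

end SymmetricUnimodal

lemma lnt_strictMonoOn {t : ℝ} (ht : 0 < t) : StrictMonoOn (lnt t) (Ioi 0) := by
  intro u hu v _ huv
  unfold lnt
  split_ifs with htu htv htv
  · exact Real.log_lt_log hu huv
  · exact absurd (htu.trans huv) htv
  · have hlog : Real.log t < Real.log v := Real.log_lt_log ht htv
    have hlin : (u - t) / t ≤ 0 := div_nonpos_of_nonpos_of_nonneg (by linarith) ht.le
    linarith
  · gcongr

lemma gauss_pos {σ : ℝ} (hσ : 0 < σ) (r : ℝ) : 0 < gauss σ r := by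
  unfold gauss
  positivity

lemma gauss_even (σ : ℝ) : Function.Even (gauss σ) := fun r => by
  simp only [gauss, neg_sq]

lemma gauss_strictAntiOn {σ : ℝ} (hσ : 0 < σ) : StrictAntiOn (gauss σ) (Ici 0) := by
  intro r hr s _ hrs
  unfold gauss
  gcongr

theorem mte_population_maximizer (σ t : ℝ) (hσ : 0 < σ) (ht : 0 < t)
    (g : ℝ → ℝ) (hg0 : ∀ x, 0 ≤ g x) (hg1 : (∫ x, g x) = 1)
    (hgsym : ∀ x, g (-x) = g x) (hgmono : AntitoneOn g (Set.Ici 0))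
    (hint : ∀ m : ℝ, Integrable (fun x => lnt t (gauss σ (x - m)) * g x)) :
    ∀ m : ℝ, m ≠ 0 →
      (∫ x, lnt t (gauss σ (x - m)) * g x) < ∫ x, lnt t (gauss σ x) * g x := by
  intro m hm
  have hloss_even : Function.Even fun r => lnt t (gauss σ r) :=
    fun r => congrArg (lnt t) (gauss_even σ r)
  have hloss_anti : StrictAntiOn (fun r => lnt t (gauss σ r)) (Ici 0) :=
    (lnt_strictMonoOn ht).comp_strictAntiOn (gauss_strictAntiOn hσ) fun r _ => gauss_pos hσ r
  exact integral_comp_sub_mul_lt_of_even_strictAntiOn hloss_even hloss_anti hgsym hgmono hg0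
    (hg1 ▸ one_pos) hint hm
end

section
/- Suppose a loss function L : ℝ^d → ℝ satisfies the restricted strong convexity bound L(β₀ + Δ) - L(β₀) - ∇L(β₀)ᵀΔ ≥ (κ/2)‖Δ‖₂² for all Δ in the cone C(S), that λ ≥ 2‖∇L(β₀)‖_∞, that β₀ is supported on S with |S| = s, and that β̂ minimizes L(β) + λ‖β‖₁ with β̂ - β₀ ∈ C(S). Then ‖β̂ - β₀‖₂ ≤ 3λ√s / κ. -/
theorem lasso_error_bound (d s : ℕ) (S : Finset (Fin d)) (hS : S.card = s)
    (L : (Fin d → ℝ) → ℝ) (β₀ βhat G : Fin d → ℝ) (κ lam : ℝ)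
    (hκ : 0 < κ)
    (hgrad : DifferentiableAt ℝ L β₀)
    (hG : ∀ Δ : Fin d → ℝ, fderiv ℝ L β₀ Δ = ∑ i, G i * Δ i)
    (hlam : ∀ i, 2 * |G i| ≤ lam)
    (hsupp : ∀ i, i ∉ S → β₀ i = 0)
    (hRSC : ∀ Δ : Fin d → ℝ,
      (∑ i ∈ Sᶜ, |Δ i| ≤ 3 * ∑ i ∈ S, |Δ i|) →
      κ / 2 * ∑ i, (Δ i) ^ 2 ≤
        L (β₀ + Δ) - L β₀ - ∑ i, G i * Δ i)
    (hmin : ∀ β : Fin d → ℝ,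
      L βhat + lam * ∑ i, |βhat i| ≤ L β + lam * ∑ i, |β i|)
    (hcone : ∑ i ∈ Sᶜ, |βhat i - β₀ i| ≤ 3 * ∑ i ∈ S, |βhat i - β₀ i|) :
    Real.sqrt (∑ i, (βhat i - β₀ i) ^ 2) ≤ 3 * lam * Real.sqrt s / κ := by
  rcases Nat.eq_zero_or_pos d with h0 | hpos
  · subst h0
    have hs : s = 0 := by
      rw [← hS, Finset.eq_empty_of_isEmpty S]; simp
    simp [hs]
  · have hlam0 : 0 ≤ lam := le_trans (by positivity) (hlam ⟨0, hpos⟩)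
    obtain ⟨Δ, hΔdef⟩ : ∃ Δ : Fin d → ℝ, Δ = fun i => βhat i - β₀ i := ⟨_, rfl⟩
    have hΔ : ∀ i, Δ i = βhat i - β₀ i := fun i => by rw [hΔdef]
    have hβ : β₀ + Δ = βhat := by funext i; simp [hΔ]
    simp only [← hΔ] at hcone ⊢
    clear hΔdef
    have hTnn : 0 ≤ ∑ i, (Δ i) ^ 2 := Finset.sum_nonneg fun i _ => sq_nonneg _
    have hsplit : ∀ f : Fin d → ℝ, ∑ i, f i = ∑ i ∈ S, f i + ∑ i ∈ Sᶜ, f i := by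
      intro f; rw [Finset.sum_add_sum_compl]
    have hSc : 0 ≤ ∑ i ∈ Sᶜ, |Δ i| := Finset.sum_nonneg fun i _ => abs_nonneg _
    have key : κ / 2 * ∑ i, (Δ i) ^ 2 ≤ 3 * lam / 2 * ∑ i ∈ S, |Δ i| := by
      have h1 := hRSC Δ hcone
      rw [hβ] at h1
      have h3 : L βhat - L β₀ ≤ lam * (∑ i, |β₀ i| - ∑ i, |βhat i|) := by
        have := hmin β₀; nlinarith [this]
      have h4 : ∑ i, |β₀ i| - ∑ i, |βhat i| ≤
          ∑ i ∈ S, |Δ i| - ∑ i ∈ Sᶜ, |Δ i| := by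
        rw [hsplit (fun i => |β₀ i|), hsplit (fun i => |βhat i|)]
        have hA : ∑ i ∈ S, |β₀ i| - ∑ i ∈ S, |βhat i| ≤ ∑ i ∈ S, |Δ i| := by
          rw [← Finset.sum_sub_distrib]
          refine Finset.sum_le_sum fun i _ => ?_
          calc |β₀ i| - |βhat i| ≤ |β₀ i - βhat i| := abs_sub_abs_le_abs_sub _ _
            _ = |Δ i| := by rw [hΔ, abs_sub_comm]
        have hB : ∑ i ∈ Sᶜ, |β₀ i| = 0 :=
          Finset.sum_eq_zero fun i hi => by
            simp [hsupp i (Finset.mem_compl.mp hi)]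
        have hC : ∑ i ∈ Sᶜ, |βhat i| = ∑ i ∈ Sᶜ, |Δ i| :=
          Finset.sum_congr rfl fun i hi => by
            simp [hΔ, hsupp i (Finset.mem_compl.mp hi)]
        linarith
      have h5 : -(∑ i, G i * Δ i) ≤ lam / 2 * ∑ i, |Δ i| := by
        calc -(∑ i, G i * Δ i) = ∑ i, -(G i * Δ i) := by
              rw [← Finset.sum_neg_distrib]
          _ ≤ ∑ i, lam / 2 * |Δ i| := by
              refine Finset.sum_le_sum fun i _ => ?_
              have h := hlam i
              nlinarith [neg_le_abs (G i * Δ i), abs_nonneg (Δ i), abs_nonneg (G i),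
                abs_mul (G i) (Δ i),
                mul_le_mul_of_nonneg_right h (abs_nonneg (Δ i))]
          _ = lam / 2 * ∑ i, |Δ i| := by rw [Finset.mul_sum]
      have h6 : ∑ i, |Δ i| = ∑ i ∈ S, |Δ i| + ∑ i ∈ Sᶜ, |Δ i| := hsplit _
      rw [h6] at h5
      have h4' : lam * (∑ i, |β₀ i| - ∑ i, |βhat i|) ≤
          lam * (∑ i ∈ S, |Δ i| - ∑ i ∈ Sᶜ, |Δ i|) :=
        mul_le_mul_of_nonneg_left h4 hlam0
      have hlsc : 0 ≤ lam * ∑ i ∈ Sᶜ, |Δ i| := mul_nonneg hlam0 hSc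
      nlinarith [h1, h3, h4', h5, hlsc]
    have hcs : ∑ i ∈ S, |Δ i| ≤ Real.sqrt s * Real.sqrt (∑ i, (Δ i) ^ 2) := by
      have h1 := Finset.sum_mul_sq_le_sq_mul_sq S (fun _ => (1 : ℝ)) (fun i => |Δ i|)
      simp only [one_pow, one_mul, Finset.sum_const, nsmul_eq_mul, mul_one] at h1
      have h2 : ∑ i ∈ S, |Δ i| ^ 2 ≤ ∑ i, (Δ i) ^ 2 := by
        calc ∑ i ∈ S, |Δ i| ^ 2 = ∑ i ∈ S, (Δ i) ^ 2 := by simp [sq_abs]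
          _ ≤ ∑ i, (Δ i) ^ 2 := Finset.sum_le_sum_of_subset_of_nonneg
              (Finset.subset_univ S) (fun i _ _ => sq_nonneg _)
      have h3 : (∑ i ∈ S, |Δ i|) ^ 2 ≤ (s : ℝ) * ∑ i, (Δ i) ^ 2 := by
        rw [← hS]
        calc (∑ i ∈ S, |Δ i|) ^ 2 ≤ (S.card : ℝ) * ∑ i ∈ S, |Δ i| ^ 2 := h1
          _ ≤ (S.card : ℝ) * ∑ i, (Δ i) ^ 2 :=
              mul_le_mul_of_nonneg_left h2 (by positivity)
      calc ∑ i ∈ S, |Δ i| = Real.sqrt ((∑ i ∈ S, |Δ i|) ^ 2) := by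
            rw [Real.sqrt_sq (Finset.sum_nonneg fun i _ => abs_nonneg _)]
        _ ≤ Real.sqrt ((s : ℝ) * ∑ i, (Δ i) ^ 2) := Real.sqrt_le_sqrt h3
        _ = Real.sqrt s * Real.sqrt (∑ i, (Δ i) ^ 2) := Real.sqrt_mul (by positivity) _
    have hann : 0 ≤ Real.sqrt (∑ i, (Δ i) ^ 2) := Real.sqrt_nonneg _
    have hTa : ∑ i, (Δ i) ^ 2 = Real.sqrt (∑ i, (Δ i) ^ 2) ^ 2 :=
      (Real.sq_sqrt hTnn).symm
    have hmain : κ / 2 * Real.sqrt (∑ i, (Δ i) ^ 2) ^ 2 ≤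
        3 * lam / 2 * (Real.sqrt s * Real.sqrt (∑ i, (Δ i) ^ 2)) := by
      calc κ / 2 * Real.sqrt (∑ i, (Δ i) ^ 2) ^ 2 = κ / 2 * ∑ i, (Δ i) ^ 2 := by
            rw [← hTa]
        _ ≤ 3 * lam / 2 * ∑ i ∈ S, |Δ i| := key
        _ ≤ 3 * lam / 2 * (Real.sqrt s * Real.sqrt (∑ i, (Δ i) ^ 2)) :=
            mul_le_mul_of_nonneg_left hcs (by linarith)
    rcases eq_or_lt_of_le hann with ha0 | hapos
    · rw [← ha0]
      positivity
    · rw [le_div_iff₀ hκ]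
      have hss : 0 ≤ Real.sqrt s := Real.sqrt_nonneg _
      nlinarith [hmain, hapos]
end
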